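/- Let p be a prime and k a field of characteristic p. For every polynomial f in the two-variable polynomial ring k[X,Y], applying the (p-1)-fold iterated partial derivative with respect to X followed by the (p-1)-fold iterated partial derivative with respect to Y sends f = \sum_{i,j} c_{i,j} X^i Y^j to \sum_{i,j} c_{ip+p-1, jp+p-1} X^{ip} Y^{jp}; i.e., the operator \nabla = \partial^{2p-2}/(\partial X^{p-1} \partial Y^{p-1}) satisfies \nabla(\sum_{i,j} c_{i,j} X^i Y^j) = \sum_{i,j} c_{ip+p-1, jp+p-1} X^{ip} Y^{jp}. -/

import Mathlib

open MvPolynomial Finsupp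

/-! On coefficients, `(∂/∂Xᵢ)^[n]` multiplies the coefficient of `X^(m + n eᵢ)` by the falling
factorial `(mᵢ + n) ⋯ (mᵢ + 1)`. For `n = p - 1` these are `p - 1` consecutive integers after `mᵢ`:
modulo `p` their product is `(p - 1)! = -1` (Wilson) when `p ∣ mᵢ`, and `0` otherwise, since
then one of them is a multiple of `p`. So `∇` keeps exactly the monomials whose two exponents are
`≡ -1 [MOD p]`, shifted down by `p - 1` in each variable, with sign `(-1)² = 1`. -/

theorem MvPolynomial.coeff_iterate_pderiv {σ R : Type*} [CommSemiring R] (i : σ) (n : ℕ)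
    (f : MvPolynomial σ R) (m : σ →₀ ℕ) :
    coeff m ((⇑(pderiv i))^[n] f) = coeff (m + single i n) f * (m i + n).descFactorial n := by
  induction n generalizing m with
  | zero => simp
  | succ n ih =>
    rw [Function.iterate_succ_apply', coeff_pderiv, ih, add_assoc, ← single_add, add_comm 1 n,
      Finsupp.add_apply, single_eq_same, mul_assoc, ← Nat.cast_add_one, ← Nat.cast_mul,
      Nat.descFactorial_succ, show m i + (n + 1) - n = m i + 1 by omega, add_assoc, add_comm 1 n,
      mul_comm (_ + 1)]

theorem Nat.cast_descFactorial_eq_of_modEq (R : Type*) [Ring R] (p : ℕ) [CharP R p]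
    {a b : ℕ} (h : a ≡ b [MOD p]) (k : ℕ) :
    (a.descFactorial k : R) = b.descFactorial k := by
  rw [← descPochhammer_eval_eq_descFactorial, ← descPochhammer_eval_eq_descFactorial,
    CharP.natCast_eq_natCast' R p h]

theorem Nat.cast_descFactorial_add_sub_one (R : Type*) [Ring R] {p : ℕ} [Fact p.Prime] [CharP R p]
    (a : ℕ) :
    ((a + (p - 1)).descFactorial (p - 1) : R) = if p ∣ a then -1 else 0 := by
  have hp : p.Prime := Fact.out
  rw [Nat.cast_descFactorial_eq_of_modEq R p ((Nat.mod_modEq a p).symm.add_right _)]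
  split_ifs with hdvd
  · rw [Nat.mod_eq_zero_of_dvd hdvd, zero_add, Nat.descFactorial_self,
      ← map_natCast (ZMod.castHom (dvd_refl p) R), ZMod.wilsons_lemma, map_neg, map_one]
  · have hpos : 0 < a % p := Nat.pos_of_ne_zero fun h => hdvd (Nat.dvd_of_mod_eq_zero h)
    have hlt : a % p < p := Nat.mod_lt a hp.pos
    rw [CharP.cast_eq_zero_iff R p]
    -- `(r + p - 1)! = r! * (r + p - 1).descFactorial (p - 1)`, and `p` divides the left side only.
    have hfact := Nat.factorial_mul_descFactorial (Nat.le_add_left (p - 1) (a % p))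
    rw [Nat.add_sub_cancel] at hfact
    have hdvd_fact : p ∣ (a % p + (p - 1)).factorial := hp.dvd_factorial.mpr (by omega)
    rw [← hfact] at hdvd_fact
    exact (hp.prime.dvd_mul.mp hdvd_fact).resolve_left
      (fun h => absurd (hp.dvd_factorial.mp h) (by omega))

theorem MvPolynomial.coeff_iterate_pderiv_sub_one_iterate_pderiv_sub_one {σ R : Type*}
    [CommRing R] {p : ℕ} [Fact p.Prime] [CharP R p] {i j : σ} (hij : i ≠ j)
    (f : MvPolynomial σ R) (m : σ →₀ ℕ) :
    coeff m ((⇑(pderiv j))^[p - 1] ((⇑(pderiv i))^[p - 1] f)) =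
      if p ∣ m i ∧ p ∣ m j then coeff (m + single j (p - 1) + single i (p - 1)) f else 0 := by
  rw [coeff_iterate_pderiv, coeff_iterate_pderiv, Finsupp.add_apply, single_eq_of_ne hij,
    add_zero, mul_assoc, Nat.cast_descFactorial_add_sub_one, Nat.cast_descFactorial_add_sub_one]
  split_ifs <;> simp_all

theorem sum_range_ite_mul_eq {M : Type*} [AddCommMonoid M] {q : ℕ} (hq : 0 < q) (N a : ℕ)
    (g : ℕ → M) :
    ∑ i ∈ Finset.range N, (if i * q = a then g i else 0) =
      if q ∣ a ∧ a / q < N then g (a / q) else 0 := by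
  by_cases hdvd : q ∣ a
  · have hiff : ∀ i, i * q = a ↔ a / q = i := fun i => by
      rw [Nat.div_eq_iff_eq_mul_left hq hdvd, eq_comm]
    simp only [hiff, Finset.sum_ite_eq, Finset.mem_range, hdvd, true_and]
  · rw [if_neg (fun h => hdvd h.1)]
    exact Finset.sum_eq_zero fun i _ => if_neg fun h => hdvd ⟨i, by rw [← h, mul_comm]⟩

theorem MvPolynomial.le_totalDegree_of_coeff_ne_zero {σ R : Type*} [CommSemiring R]
    {f : MvPolynomial σ R} {d : σ →₀ ℕ} (h : coeff d f ≠ 0) (x : σ) : d x ≤ f.totalDegree :=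
  (monomial_le_degreeOf x (mem_support_iff.mpr h)).trans (degreeOf_le_totalDegree f x)

theorem MvPolynomial.coeff_sum_range_C_mul_X_pow_mul_X_pow {R : Type*} [CommSemiring R]
    {q : ℕ} (hq : 0 < q) (N : ℕ) (c : ℕ → ℕ → R) (m : Fin 2 →₀ ℕ) :
    coeff m (∑ i ∈ Finset.range N, ∑ j ∈ Finset.range N,
        C (c i j) * X 0 ^ (i * q) * X 1 ^ (j * q)) =
      if q ∣ m 0 ∧ m 0 / q < N ∧ q ∣ m 1 ∧ m 1 / q < N then c (m 0 / q) (m 1 / q) else 0 := by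
  have hmonomial : ∀ a b (r : R),
      C r * X (0 : Fin 2) ^ a * X 1 ^ b = monomial (single 0 a + single 1 b) r := by
    intro a b r
    rw [X_pow_eq_monomial, X_pow_eq_monomial, C_mul_monomial, monomial_mul, mul_one, mul_one]
  have hexp : ∀ a b, single 0 a + single 1 b = m ↔ a = m 0 ∧ b = m 1 := by
    intro a b
    simp [Finsupp.ext_iff, Fin.forall_fin_two, eq_comm]
  simp only [coeff_sum, hmonomial, coeff_monomial, hexp, ite_and]
  simp only [Finset.sum_ite_irrel, Finset.sum_const_zero, sum_range_ite_mul_eq hq, ite_and]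

/-- The iterated-partial-derivative operator `∇ = ∂^{2p-2}/(∂X^{p-1} ∂Y^{p-1})` on `k[X,Y]`
(`k` a field of characteristic `p`) sends `∑_{i,j} c_{i,j} X^i Y^j` to
`∑_{i,j} c_{ip+p-1, jp+p-1} X^{ip} Y^{jp}`. -/
theorem nabla_formula (p : ℕ) (hp : p.Prime) (k : Type*) [Field k] [CharP k p]
    (f : MvPolynomial (Fin 2) k) :
    (⇑(pderiv (1 : Fin 2)))^[p - 1] ((⇑(pderiv (0 : Fin 2)))^[p - 1] f) =
    ∑ i ∈ Finset.range (f.totalDegree + 1), ∑ j ∈ Finset.range (f.totalDegree + 1),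
      C (coeff (Finsupp.single (0 : Fin 2) (i * p + p - 1)
            + Finsupp.single (1 : Fin 2) (j * p + p - 1)) f)
        * X 0 ^ (i * p) * X 1 ^ (j * p) := by
  have : Fact p.Prime := ⟨hp⟩
  ext m
  rw [coeff_iterate_pderiv_sub_one_iterate_pderiv_sub_one (by decide : (0 : Fin 2) ≠ 1),
    coeff_sum_range_C_mul_X_pow_mul_X_pow hp.pos]
  by_cases hdvd : p ∣ m 0 ∧ p ∣ m 1
  · have hexp : single 0 (m 0 / p * p + p - 1) + single 1 (m 1 / p * p + p - 1) =
        m + single 1 (p - 1) + single 0 (p - 1) := by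
      have := hp.one_le
      ext x
      fin_cases x <;> simp [Nat.div_mul_cancel hdvd.1, Nat.div_mul_cancel hdvd.2] <;> omega
    rw [hexp]
    -- nonzero coefficients lie within the total degree, so the range bound on `m / p` is automatic
    by_cases hcoeff : coeff (m + single 1 (p - 1) + single 0 (p - 1)) f = 0
    · simp only [hcoeff, ite_self]
    have hbound : ∀ x, m x / p < f.totalDegree + 1 := fun x =>
      Nat.lt_succ_of_le <| (Nat.div_le_self _ _).trans <|
        (by simp only [Finsupp.coe_add, Pi.add_apply]; omega :
          m x ≤ (m + single 1 (p - 1) + single 0 (p - 1) : Fin 2 →₀ ℕ) x).trans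
          (le_totalDegree_of_coeff_ne_zero hcoeff x)
    rw [if_pos hdvd, if_pos ⟨hdvd.1, hbound 0, hdvd.2, hbound 1⟩]
  · rw [if_neg hdvd, if_neg (by tauto)]
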